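/- arXiv:1811.09351 — 2 statements merged into one kernel-verified Lean document; each statement's English description precedes it below -/
import Mathlib

section
/- Under the same hypotheses, with K = K_x ⊗ M_y + M_x ⊗ K_y, one has Ã⁻¹K = (P_x ⊗ P_y)(E_x D_x ⊗ E_y + E_x ⊗ E_y D_y)(P_x⁻¹ ⊗ P_y⁻¹). -/
open Matrix Kronecker

/-!
Write `Q = M P`. Since `P P⁻¹ = 1`, the one-dimensional matrices factor as `M = Q P⁻¹`,
`K = Q D P⁻¹` and `M + η K = Q (1 + η D) P⁻¹`, and the Kronecker product respects these
factorizations. Hence `Ã = (Q_x ⊗ Q_y) (E_x⁻¹ ⊗ E_y⁻¹) (P_x ⊗ P_y)⁻¹` and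
`K = (Q_x ⊗ Q_y) (D_x ⊗ 1 + 1 ⊗ D_y) (P_x ⊗ P_y)⁻¹`, so in `Ã⁻¹ K` the outer factor
`Q_x ⊗ Q_y` cancels and only the conjugation by `P_x ⊗ P_y` remains.
-/

namespace Matrix

variable {ι κ R : Type*} [Fintype ι] [DecidableEq ι] [Fintype κ] [DecidableEq κ] [CommRing R]

theorem add_smul_mul_mul_nonsing_inv {M P : Matrix ι ι R} (D : Matrix ι ι R) (η : R)
    (hP : IsUnit P.det) : M + η • (M * P * D * P⁻¹) = M * P * (1 + η • D) * P⁻¹ := by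
  rw [Matrix.mul_add, Matrix.add_mul, Matrix.mul_one, mul_nonsing_inv_cancel_right _ _ hP,
    Matrix.mul_smul, Matrix.smul_mul]

theorem mul_mul_nonsing_inv_inv_mul {S T : Matrix ι ι R} (E F : Matrix ι ι R)
    (hS : IsUnit S.det) (hT : IsUnit T.det) :
    (S * E * T⁻¹)⁻¹ * (S * F * T⁻¹) = T * (E⁻¹ * F) * T⁻¹ := by
  simp only [mul_inv_rev, nonsing_inv_nonsing_inv _ hT, Matrix.mul_assoc]
  rw [nonsing_inv_mul_cancel_left _ _ hS]

theorem mul_mul_nonsing_inv_kronecker (A₁ X₁ B₁ : Matrix ι ι R) (A₂ X₂ B₂ : Matrix κ κ R) :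
    (A₁ * X₁ * B₁⁻¹) ⊗ₖ (A₂ * X₂ * B₂⁻¹) = (A₁ ⊗ₖ A₂) * (X₁ ⊗ₖ X₂) * (B₁ ⊗ₖ B₂)⁻¹ := by
  rw [inv_kronecker, mul_kronecker_mul, mul_kronecker_mul]

theorem isUnit_det_kronecker {A : Matrix ι ι R} {B : Matrix κ κ R}
    (hA : IsUnit A.det) (hB : IsUnit B.det) : IsUnit (A ⊗ₖ B).det :=
  (isUnit_iff_isUnit_det _).mp <|
    ((isUnit_iff_isUnit_det A).mpr hA).kronecker ((isUnit_iff_isUnit_det B).mpr hB)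

theorem kronecker_add_kronecker_eq_mul_mul_nonsing_inv (Q₁ D₁ P₁ : Matrix ι ι R)
    (Q₂ D₂ P₂ : Matrix κ κ R) :
    (Q₁ * D₁ * P₁⁻¹) ⊗ₖ (Q₂ * P₂⁻¹) + (Q₁ * P₁⁻¹) ⊗ₖ (Q₂ * D₂ * P₂⁻¹) =
      (Q₁ ⊗ₖ Q₂) * (D₁ ⊗ₖ 1 + 1 ⊗ₖ D₂) * (P₁ ⊗ₖ P₂)⁻¹ := by
  simpa only [Matrix.mul_one, Matrix.mul_add, Matrix.add_mul] using
    congrArg₂ (· + ·) (mul_mul_nonsing_inv_kronecker Q₁ D₁ P₁ Q₂ 1 P₂)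
      (mul_mul_nonsing_inv_kronecker Q₁ 1 P₁ Q₂ D₂ P₂)

theorem kronecker_nonsing_inv_mul_add (E₁ D₁ : Matrix ι ι R) (E₂ D₂ : Matrix κ κ R) :
    (E₁ ⊗ₖ E₂)⁻¹ * (D₁ ⊗ₖ 1 + 1 ⊗ₖ D₂) = (E₁⁻¹ * D₁) ⊗ₖ E₂⁻¹ + E₁⁻¹ ⊗ₖ (E₂⁻¹ * D₂) := by
  rw [inv_kronecker, Matrix.mul_add, ← mul_kronecker_mul, ← mul_kronecker_mul,
    Matrix.mul_one, Matrix.mul_one]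

end Matrix

theorem split_inverse_stiffness_general (n m : ℕ)
    (Mx Kx Px Dx : Matrix (Fin n) (Fin n) ℝ)
    (My Ky Py Dy : Matrix (Fin m) (Fin m) ℝ) (η : ℝ)
    (hMx : IsUnit Mx.det) (hMy : IsUnit My.det)
    (hPx : IsUnit Px.det) (hPy : IsUnit Py.det)
    (hKx : Kx = Mx * Px * Dx * Px⁻¹) (hKy : Ky = My * Py * Dy * Py⁻¹) :
    ((Mx + η • Kx) ⊗ₖ (My + η • Ky))⁻¹ * (Kx ⊗ₖ My + Mx ⊗ₖ Ky) =
      (Px ⊗ₖ Py) * (((1 + η • Dx)⁻¹ * Dx) ⊗ₖ (1 + η • Dy)⁻¹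
        + (1 + η • Dx)⁻¹ ⊗ₖ ((1 + η • Dy)⁻¹ * Dy)) * (Px⁻¹ ⊗ₖ Py⁻¹) := by
  have hQ : IsUnit ((Mx * Px) ⊗ₖ (My * Py)).det :=
    isUnit_det_kronecker (det_mul Mx Px ▸ hMx.mul hPx) (det_mul My Py ▸ hMy.mul hPy)
  calc ((Mx + η • Kx) ⊗ₖ (My + η • Ky))⁻¹ * (Kx ⊗ₖ My + Mx ⊗ₖ Ky)
      = (((Mx * Px) ⊗ₖ (My * Py)) * ((1 + η • Dx) ⊗ₖ (1 + η • Dy)) * (Px ⊗ₖ Py)⁻¹)⁻¹ *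
          (((Mx * Px) ⊗ₖ (My * Py)) * (Dx ⊗ₖ 1 + 1 ⊗ₖ Dy) * (Px ⊗ₖ Py)⁻¹) := by
        rw [← mul_mul_nonsing_inv_kronecker, ← kronecker_add_kronecker_eq_mul_mul_nonsing_inv,
          ← add_smul_mul_mul_nonsing_inv _ _ hPx, ← add_smul_mul_mul_nonsing_inv _ _ hPy,
          mul_nonsing_inv_cancel_right _ Mx hPx, mul_nonsing_inv_cancel_right _ My hPy, hKx, hKy]
    _ = (Px ⊗ₖ Py) * (((1 + η • Dx) ⊗ₖ (1 + η • Dy))⁻¹ * (Dx ⊗ₖ 1 + 1 ⊗ₖ Dy)) *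
          (Px ⊗ₖ Py)⁻¹ :=
        mul_mul_nonsing_inv_inv_mul _ _ hQ (isUnit_det_kronecker hPx hPy)
    _ = _ := by rw [kronecker_nonsing_inv_mul_add, inv_kronecker]

theorem split_inverse_stiffness (n m : ℕ)
    (Mx Kx Px Dx : Matrix (Fin n) (Fin n) ℝ) (dx : Fin n → ℝ)
    (My Ky Py Dy : Matrix (Fin m) (Fin m) ℝ) (dy : Fin m → ℝ) (η : ℝ)
    (hDx : Dx = Matrix.diagonal dx) (hDy : Dy = Matrix.diagonal dy)
    (hMx : IsUnit Mx.det) (hMy : IsUnit My.det)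
    (hPx : IsUnit Px.det) (hPy : IsUnit Py.det)
    (hEx : IsUnit (1 + η • Dx).det) (hEy : IsUnit (1 + η • Dy).det)
    (hKx : Kx = Mx * Px * Dx * Px⁻¹) (hKy : Ky = My * Py * Dy * Py⁻¹) :
    ((Mx + η • Kx) ⊗ₖ (My + η • Ky))⁻¹ * (Kx ⊗ₖ My + Mx ⊗ₖ Ky) =
      (Px ⊗ₖ Py) * (((1 + η • Dx)⁻¹ * Dx) ⊗ₖ (1 + η • Dy)⁻¹
        + (1 + η • Dx)⁻¹ ⊗ₖ ((1 + η • Dy)⁻¹ * Dy)) * (Px⁻¹ ⊗ₖ Py⁻¹) :=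
  split_inverse_stiffness_general n m Mx Kx Px Dx My Ky Py Dy η hMx hMy hPx hPy hKx hKy
end

section
/- Let μ ≥ 0 and let λ̃ be a root of the quadratic (1 − γμ/(α_m + γα_f μ) − λ̃)(1 − (1 + α_f μ)/(α_m + γα_f μ) − λ̃) + (μ/(α_m + γα_f μ))(1 − (γ + γα_f μ)/(α_m + γα_f μ)) = 0. If α_m ≥ α_f ≥ 1/2 and γ = 1/2 + α_m − α_f, then |λ̃| ≤ 1. -/
/-!
The root `λ̃` is an eigenvalue of a real 2×2 amplification matrix, so it solves the monic real
quadratic `z² - S z + P = 0`, `S` and `P` the trace and determinant. By the Jury (Schur–Cohn)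
criterion such roots lie in the closed unit disk as soon as `P ≤ 1`, `1 - S + P ≥ 0` and
`1 + S + P ≥ 0`. With `D = α_m + γ α_f μ > 0` these three quantities are
`(1 + (γ + α_f - 1) μ) / D`, `μ / D` and `(2 (2α_m - 1) + (2γ - 1)(2α_f - 1) μ) / D`, all
nonnegative when `α_m ≥ α_f ≥ 1/2` and `γ = 1/2 + α_m - α_f`.
-/

theorem abs_le_one_of_jury {S P x : ℝ} (hx : x ^ 2 - S * x + P = 0) (hP : P ≤ 1)
    (h₁ : 0 ≤ 1 - S + P) (h₂ : 0 ≤ 1 + S + P) : |x| ≤ 1 := by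
  -- `S - x` is the other root: `x (S - x) = P`, `(1 ∓ x)(1 ∓ (S - x)) = 1 ∓ S + P`.
  have hprod : x * (S - x) = P := by linear_combination -hx
  refine abs_le.2 ⟨?_, ?_⟩
  · by_contra! h
    nlinarith
  · by_contra! h
    nlinarith

theorem Complex.norm_le_one_of_jury {S P : ℝ} {z : ℂ} (hz : z ^ 2 - S * z + P = 0) (hP : P ≤ 1)
    (h₁ : 0 ≤ 1 - S + P) (h₂ : 0 ≤ 1 + S + P) : ‖z‖ ≤ 1 := by
  have hre : z.re ^ 2 - z.im ^ 2 - S * z.re + P = 0 := by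
    simpa [sq] using congrArg Complex.re hz
  have him : z.im * (2 * z.re - S) = 0 := by
    have := congrArg Complex.im hz
    simp only [sq, Complex.add_im, Complex.sub_im, Complex.mul_im, Complex.ofReal_re,
      Complex.ofReal_im, zero_mul, add_zero, Complex.zero_im] at this
    linear_combination this
  rcases mul_eq_zero.1 him with hreal | htrace
  · have hz : z = z.re := Complex.ext rfl (by simpa using hreal)
    rw [hz, Complex.norm_real, Real.norm_eq_abs]
    exact abs_le_one_of_jury (by simpa [hreal] using hre) hP h₁ h₂
  · -- a non-real root and its conjugate are the two roots, so `‖z‖² = P`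
    have hnorm : ‖z‖ ^ 2 = P := by
      rw [Complex.sq_norm, Complex.normSq_apply]
      linear_combination (-1) * hre + z.re * htrace
    nlinarith [norm_nonneg z]

namespace GenAlpha

variable (μ αm αf γ : ℝ)

noncomputable def denom : ℝ := αm + γ * αf * μ

noncomputable def trace : ℝ :=
  (1 - γ * μ / denom μ αm αf γ) + (1 - (1 + αf * μ) / denom μ αm αf γ)

noncomputable def det : ℝ :=
  (1 - γ * μ / denom μ αm αf γ) * (1 - (1 + αf * μ) / denom μ αm αf γ)
    + μ / denom μ αm αf γ * (1 - (γ + γ * αf * μ) / denom μ αm αf γ)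

variable {μ αm αf γ}

theorem denom_pos (hμ : 0 ≤ μ) (hm : 0 < αm) (hf : 0 ≤ αf) (hγ : 0 ≤ γ) :
    0 < denom μ αm αf γ := by
  unfold denom
  positivity

-- In the three identities below, `αm` is eliminated in favour of `D = denom`, so that
-- `field_simp` only sees the single denominator `D`.
theorem one_sub_det (hD : denom μ αm αf γ ≠ 0) :
    1 - det μ αm αf γ = (1 + (γ + αf - 1) * μ) / denom μ αm αf γ := by
  have hαm : αm = denom μ αm αf γ - γ * αf * μ := by unfold denom; ring
  unfold det
  generalize denom μ αm αf γ = D at hD hαm ⊢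
  subst hαm
  field_simp
  ring

theorem one_sub_trace_add_det (hD : denom μ αm αf γ ≠ 0) :
    1 - trace μ αm αf γ + det μ αm αf γ = μ / denom μ αm αf γ := by
  have hαm : αm = denom μ αm αf γ - γ * αf * μ := by unfold denom; ring
  unfold det trace
  generalize denom μ αm αf γ = D at hD hαm ⊢
  subst hαm
  field_simp
  ring

theorem one_add_trace_add_det (hD : denom μ αm αf γ ≠ 0) :
    1 + trace μ αm αf γ + det μ αm αf γ =
      (2 * (2 * αm - 1) + (2 * γ - 1) * (2 * αf - 1) * μ) / denom μ αm αf γ := by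
  have hαm : αm = denom μ αm αf γ - γ * αf * μ := by unfold denom; ring
  unfold det trace
  generalize denom μ αm αf γ = D at hD hαm ⊢
  subst hαm
  field_simp
  ring

theorem sq_sub_trace_mul_add_det {lam : ℂ}
    (h : ((1 : ℂ) - (γ * μ / (αm + γ * αf * μ) : ℝ) - lam) *
          ((1 : ℂ) - ((1 + αf * μ) / (αm + γ * αf * μ) : ℝ) - lam)
        + ((μ / (αm + γ * αf * μ) : ℝ) : ℂ) *
          ((1 : ℂ) - ((γ + γ * αf * μ) / (αm + γ * αf * μ) : ℝ)) = 0) :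
    lam ^ 2 - trace μ αm αf γ * lam + det μ αm αf γ = 0 := by
  unfold trace det denom
  push_cast at h ⊢
  linear_combination h

end GenAlpha

open GenAlpha in
theorem genalpha_unconditional_stability (μ αm αf γ : ℝ)
    (hμ : 0 ≤ μ) (hmf : αm ≥ αf) (hf : αf ≥ 1 / 2) (hγ : γ = 1 / 2 + αm - αf)
    (lamt : ℂ)
    (hroot : ((1 : ℂ) - (γ * μ / (αm + γ * αf * μ) : ℝ) - lamt) *
          ((1 : ℂ) - ((1 + αf * μ) / (αm + γ * αf * μ) : ℝ) - lamt)
        + ((μ / (αm + γ * αf * μ) : ℝ) : ℂ) *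
          ((1 : ℂ) - ((γ + γ * αf * μ) / (αm + γ * αf * μ) : ℝ)) = 0) :
    ‖lamt‖ ≤ 1 := by
  have hD : 0 < denom μ αm αf γ := denom_pos hμ (by linarith) (by linarith) (by linarith)
  refine Complex.norm_le_one_of_jury (sq_sub_trace_mul_add_det hroot) ?_ ?_ ?_
  · rw [← sub_nonneg, one_sub_det hD.ne']
    have : 0 ≤ (γ + αf - 1) * μ := mul_nonneg (by linarith) hμ
    exact div_nonneg (by linarith) hD.le
  · rw [one_sub_trace_add_det hD.ne']
    exact div_nonneg hμ hD.le
  · rw [one_add_trace_add_det hD.ne']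
    have : 0 ≤ (2 * γ - 1) * (2 * αf - 1) * μ :=
      mul_nonneg (mul_nonneg (by linarith) (by linarith)) hμ
    exact div_nonneg (by linarith) hD.le
end
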